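/- Let 1 ≤ p ≤ ∞ and let θ be an inner function with θ(0) = 0. Suppose u ∈ Re H^p. Then u ∈ Re K^p_θ if and only if the function ζ ↦ \bar{ζ} u(ζ) θ(ζ) on the unit circle T coincides m-a.e. with the boundary values of some function in H^p. -/

import Mathlib

open MeasureTheory Complex Set Metric ENNReal

noncomputable section

/-- Normalized Lebesgue (arclength) measure `m` on the unit circle `T`, as a measure on `ℂ`. -/
def circleMeasure : Measure ℂ :=
  (ENNReal.ofReal (2 * Real.pi))⁻¹ •
    Measure.map (fun t : ℝ => Complex.exp (t * Complex.I)) (volume.restrict (Ioc 0 (2 * Real.pi)))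

/-- The open unit disk `D`. -/
def unitDisk : Set ℂ := ball (0 : ℂ) 1

/-- `g` is, `m`-a.e. on the circle, the (radial) boundary-value function of `f`. -/
def IsBoundaryValue (f g : ℂ → ℂ) : Prop :=
  ∀ᵐ ζ ∂circleMeasure,
    Filter.Tendsto (fun r : ℝ => f (((r : ℂ)) * ζ)) (nhdsWithin 1 (Iio 1)) (nhds (g ζ))

/-- The Hardy norm `‖f‖_p`; for `p = ∞` it is the sup norm over the disk. -/
def hNorm (p : ℝ≥0∞) (f : ℂ → ℂ) : ℝ≥0∞ :=
  if p = ⊤ then ⨆ z : unitDisk, (‖f (z : ℂ)‖₊ : ℝ≥0∞)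
  else ⨆ r : Ioo (0 : ℝ) 1,
    (∫⁻ ζ, (‖f ((((r : ℝ) : ℂ)) * ζ)‖₊ : ℝ≥0∞) ^ p.toReal ∂circleMeasure) ^ (1 / p.toReal)

/-- Membership in the Hardy space `H^p` (with `f` identified with its boundary values,
i.e. the values of `f` on the circle are `m`-a.e. its radial limits from the disk). -/
def MemHp (p : ℝ≥0∞) (f : ℂ → ℂ) : Prop :=
  DifferentiableOn ℂ f unitDisk ∧ hNorm p f < ⊤ ∧ IsBoundaryValue f f

/-- Inner functions: bounded holomorphic with unimodular boundary values. -/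
def IsInner (θ : ℂ → ℂ) : Prop :=
  MemHp ⊤ θ ∧ ∀ᵐ ζ ∂circleMeasure, ‖θ ζ‖ = 1

/-- `θ` is nonconstant on the unit disk. -/
def Nonconstant (θ : ℂ → ℂ) : Prop := ¬ ∃ c : ℂ, ∀ z ∈ unitDisk, θ z = c

/-- Membership in the star-invariant subspace `K^p_θ`:  `f ∈ H^p` and the function
`ζ ↦ conj ζ * conj (f ζ) * θ ζ` on the circle coincides `m`-a.e. with (the boundary values of)
an `H^p` function. -/
def MemKp (p : ℝ≥0∞) (θ f : ℂ → ℂ) : Prop :=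
  MemHp p f ∧ ∃ h : ℂ → ℂ, MemHp p h ∧
    ∀ᵐ ζ ∂circleMeasure, h ζ = (starRingEnd ℂ) ζ * (starRingEnd ℂ) (f ζ) * θ ζ

/-- `u ∈ Re H^p`. -/
def MemReHp (p : ℝ≥0∞) (u : ℂ → ℝ) : Prop :=
  ∃ f : ℂ → ℂ, MemHp p f ∧ ∀ᵐ ζ ∂circleMeasure, u ζ = (f ζ).re

/-- `u ∈ Re K^p_θ`. -/
def MemReKp (p : ℝ≥0∞) (θ : ℂ → ℂ) (u : ℂ → ℝ) : Prop :=
  ∃ f : ℂ → ℂ, MemKp p θ f ∧ ∀ᵐ ζ ∂circleMeasure, u ζ = (f ζ).re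

/-!
Write `φ = dslope θ 0`, so that `θ(z) = z φ(z)`; by the Schwarz lemma `φ ∈ H^∞`, hence `gφ ∈ H^p`
for every `g ∈ H^p`, and on the circle `gφ = ζ̄ g θ`. If `u = Re g`, then
`2 ζ̄ u θ = gφ + ζ̄ ḡ θ`, so `ζ̄ u θ ∈ H^p` exactly when `ζ̄ ḡ θ ∈ H^p`, i.e. when `g ∈ K^p_θ`.
-/

open Filter Topology ComplexConjugate NNReal

lemma circleMeasure_ae_norm_eq_one : ∀ᵐ ζ ∂circleMeasure, ‖ζ‖ = 1 := by
  have hcexp : Measurable fun t : ℝ => exp (t * I) := by fun_prop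
  rw [ae_iff, circleMeasure, Measure.smul_apply, Measure.map_apply hcexp]
  · simp [norm_exp]
  · exact (measurableSet_eq_fun measurable_norm measurable_const).compl

lemma ofReal_mul_mem_unitDisk {r : ℝ} (hr : r ∈ Ioo 0 1) {ζ : ℂ} (hζ : ‖ζ‖ = 1) :
    (r : ℂ) * ζ ∈ unitDisk := by
  simp [unitDisk, hζ, abs_of_pos hr.1, hr.2]

lemma ContinuousOn.aestronglyMeasurable_comp_ofReal_mul {f : ℂ → ℂ}
    (hf : ContinuousOn f unitDisk) {r : ℝ} (hr : r ∈ Ioo 0 1) :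
    AEStronglyMeasurable (fun ζ => f (r * ζ)) circleMeasure := by
  have hsphere : circleMeasure.restrict (sphere 0 1) = circleMeasure :=
    Measure.restrict_eq_self_of_ae_mem <| circleMeasure_ae_norm_eq_one.mono fun ζ hζ => by simpa
  rw [← hsphere]
  refine ContinuousOn.aestronglyMeasurable (hf.comp (by fun_prop) fun ζ hζ => ?_)
    isClosed_sphere.measurableSet
  exact ofReal_mul_mem_unitDisk hr (by simpa using hζ)

lemma tendsto_ofReal_mul_nhdsWithin_one (ζ : ℂ) :
    Tendsto (fun r : ℝ => (r : ℂ) * ζ) (𝓝[<] 1) (𝓝 ζ) :=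
  ((continuous_ofReal.mul continuous_const).tendsto' 1 ζ (by simp)).mono_left nhdsWithin_le_nhds

section HardyNorm

variable {p : ℝ≥0∞} {f g : ℂ → ℂ}

lemma hNorm_top : hNorm ⊤ f = ⨆ z : unitDisk, ‖f z‖ₑ := if_pos rfl

lemma hNorm_eq_iSup_eLpNorm (hp0 : p ≠ 0) (hp : p ≠ ⊤) :
    hNorm p f = ⨆ r : Ioo (0 : ℝ) 1, eLpNorm (fun ζ => f (r * ζ)) p circleMeasure := by
  simp only [hNorm, if_neg hp, eLpNorm_eq_lintegral_rpow_enorm_toReal hp0 hp]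
  rfl

lemma enorm_le_hNorm_top {z : ℂ} (hz : z ∈ unitDisk) : ‖f z‖ₑ ≤ hNorm ⊤ f :=
  hNorm_top ▸ le_iSup (fun w : unitDisk => ‖f w‖ₑ) ⟨z, hz⟩

lemma hNorm_le_mul_of_enorm_le (hp0 : p ≠ 0) {c : ℝ≥0}
    (h : ∀ z ∈ unitDisk, ‖f z‖ₑ ≤ c * ‖g z‖ₑ) : hNorm p f ≤ c * hNorm p g := by
  by_cases hp : p = ⊤
  · rw [hp, hNorm_top]
    exact iSup_le fun z => (h z z.2).trans (mul_le_mul_right (enorm_le_hNorm_top z.2) _)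
  rw [hNorm_eq_iSup_eLpNorm hp0 hp, hNorm_eq_iSup_eLpNorm hp0 hp, ENNReal.mul_iSup]
  refine iSup_mono fun r => eLpNorm_le_mul_eLpNorm_of_ae_le_mul' ?_ p
  filter_upwards [circleMeasure_ae_norm_eq_one] with ζ hζ
  exact h _ (ofReal_mul_mem_unitDisk r.2 hζ)

lemma hNorm_add_le (hp : 1 ≤ p) (hf : ContinuousOn f unitDisk) (hg : ContinuousOn g unitDisk) :
    hNorm p (f + g) ≤ hNorm p f + hNorm p g := by
  by_cases hptop : p = ⊤
  · rw [hptop, hNorm_top]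
    exact iSup_le fun z => (enorm_add_le _ _).trans
      (add_le_add (enorm_le_hNorm_top z.2) (enorm_le_hNorm_top z.2))
  have hp0 : p ≠ 0 := (zero_lt_one.trans_le hp).ne'
  simp only [hNorm_eq_iSup_eLpNorm hp0 hptop]
  refine iSup_le fun r => (eLpNorm_add_le (hf.aestronglyMeasurable_comp_ofReal_mul r.2)
    (hg.aestronglyMeasurable_comp_ofReal_mul r.2) hp).trans (add_le_add ?_ ?_)
  · exact le_iSup (fun s : Ioo (0 : ℝ) 1 => eLpNorm (fun ζ => f (s * ζ)) p circleMeasure) r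
  · exact le_iSup (fun s : Ioo (0 : ℝ) 1 => eLpNorm (fun ζ => g (s * ζ)) p circleMeasure) r

/-- **Schwarz lemma** in terms of the `H^∞` norm. -/
lemma hNorm_top_dslope_zero_le (hf : DifferentiableOn ℂ f unitDisk) (hf0 : f 0 = 0) :
    hNorm ⊤ (dslope f 0) ≤ hNorm ⊤ f := by
  rcases eq_or_ne (hNorm ⊤ f) ⊤ with hfin | hfin
  · rw [hfin]
    exact le_top
  have hmaps : MapsTo f unitDisk (closedBall (f 0) (hNorm ⊤ f).toReal) := fun z hz => by
    rw [hf0, mem_closedBall_zero_iff, ← ENNReal.ofReal_le_iff_le_toReal hfin, ofReal_norm]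
    exact enorm_le_hNorm_top hz
  refine hNorm_top.trans_le (iSup_le fun z => ?_)
  have hschwarz := norm_dslope_le_div_of_mapsTo_ball hf hmaps z.2
  rw [div_one] at hschwarz
  rw [← ofReal_norm, ← ENNReal.ofReal_toReal hfin]
  exact ENNReal.ofReal_le_ofReal hschwarz

end HardyNorm

section BoundaryValues

variable {f f' g g' : ℂ → ℂ}

lemma IsBoundaryValue.add (hf : IsBoundaryValue f f') (hg : IsBoundaryValue g g') :
    IsBoundaryValue (f + g) (f' + g') := by
  filter_upwards [hf, hg] with ζ hfζ hgζ
  exact hfζ.add hgζ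

lemma IsBoundaryValue.mul (hf : IsBoundaryValue f f') (hg : IsBoundaryValue g g') :
    IsBoundaryValue (f * g) (f' * g') := by
  filter_upwards [hf, hg] with ζ hfζ hgζ
  exact hfζ.mul hgζ

lemma IsBoundaryValue.const_smul (c : ℂ) (hf : IsBoundaryValue f f') :
    IsBoundaryValue (c • f) (c • f') := by
  filter_upwards [hf] with ζ hfζ
  exact hfζ.const_smul c

lemma dslope_zero_of_ne (hf0 : f 0 = 0) {z : ℂ} (hz : z ≠ 0) : dslope f 0 z = z⁻¹ * f z := by
  simp [dslope_of_ne f hz, slope_def_field, hf0, div_eq_inv_mul]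

lemma dslope_zero_eq_conj_mul (hf0 : f 0 = 0) {ζ : ℂ} (hζ : ‖ζ‖ = 1) :
    dslope f 0 ζ = conj ζ * f ζ := by
  rw [dslope_zero_of_ne hf0 (norm_ne_zero_iff.mp (hζ ▸ one_ne_zero)), inv_eq_conj hζ]

lemma IsBoundaryValue.dslope_zero (hf : IsBoundaryValue f f) (hf0 : f 0 = 0) :
    IsBoundaryValue (dslope f 0) (dslope f 0) := by
  filter_upwards [circleMeasure_ae_norm_eq_one, hf] with ζ hζ hfζ
  have hζ0 : ζ ≠ 0 := norm_ne_zero_iff.mp (hζ ▸ one_ne_zero)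
  rw [dslope_zero_of_ne hf0 hζ0]
  refine (((tendsto_ofReal_mul_nhdsWithin_one ζ).inv₀ hζ0).mul hfζ).congr' ?_
  filter_upwards [eventually_nhdsWithin_of_eventually_nhds (eventually_gt_nhds one_pos)]
    with r hr
  exact (dslope_zero_of_ne hf0 (mul_ne_zero (ofReal_ne_zero.mpr hr.ne') hζ0)).symm

end BoundaryValues

section HardySpace

variable {p : ℝ≥0∞} {f g φ : ℂ → ℂ}

lemma MemHp.add (hp : 1 ≤ p) (hf : MemHp p f) (hg : MemHp p g) : MemHp p (f + g) :=
  ⟨hf.1.add hg.1,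
    (hNorm_add_le hp hf.1.continuousOn hg.1.continuousOn).trans_lt
      (ENNReal.add_lt_top.mpr ⟨hf.2.1, hg.2.1⟩),
    hf.2.2.add hg.2.2⟩

lemma MemHp.const_smul (hp0 : p ≠ 0) (c : ℂ) (hf : MemHp p f) : MemHp p (c • f) :=
  ⟨hf.1.const_smul c,
    (hNorm_le_mul_of_enorm_le (c := ‖c‖₊) hp0 fun z _ => (enorm_smul c (f z)).le).trans_lt
      (ENNReal.mul_lt_top ENNReal.coe_lt_top hf.2.1),
    hf.2.2.const_smul c⟩

lemma MemHp.sub (hp : 1 ≤ p) (hf : MemHp p f) (hg : MemHp p g) : MemHp p (f - g) := by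
  simpa [sub_eq_add_neg] using hf.add hp (hg.const_smul (zero_lt_one.trans_le hp).ne' (-1))

lemma MemHp.mul (hp0 : p ≠ 0) (hf : MemHp p f) (hφ : MemHp ⊤ φ) : MemHp p (f * φ) := by
  have hbound : ∀ z ∈ unitDisk, ‖(f * φ) z‖ₑ ≤ (hNorm ⊤ φ).toNNReal * ‖f z‖ₑ := fun z hz => by
    rw [Pi.mul_apply, enorm_mul, mul_comm, ENNReal.coe_toNNReal hφ.2.1.ne]
    exact mul_le_mul_left (enorm_le_hNorm_top hz) _
  exact ⟨hf.1.mul hφ.1,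
    (hNorm_le_mul_of_enorm_le hp0 hbound).trans_lt (ENNReal.mul_lt_top ENNReal.coe_lt_top hf.2.1),
    hf.2.2.mul hφ.2.2⟩

lemma MemHp.dslope_zero (hφ : MemHp ⊤ φ) (hφ0 : φ 0 = 0) : MemHp ⊤ (dslope φ 0) :=
  ⟨(differentiableOn_dslope (isOpen_ball.mem_nhds (mem_ball_self one_pos))).mpr hφ.1,
    (hNorm_top_dslope_zero_le hφ.1 hφ0).trans_lt hφ.2.1,
    hφ.2.2.dslope_zero hφ0⟩

end HardySpace

/-- Theorem 2.1(a): for `θ` inner with `θ(0) = 0` and `u ∈ Re H^p` (`1 ≤ p ≤ ∞`),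
`u ∈ Re K^p_θ` iff `ζ ↦ conj ζ * u ζ * θ ζ` coincides `m`-a.e. with an `H^p` function. -/
theorem realParts_thetaZero (p : ℝ≥0∞) (hp : 1 ≤ p) (θ : ℂ → ℂ) (hθ : IsInner θ)
    (hθ0 : θ 0 = 0) (u : ℂ → ℝ) (hu : MemReHp p u) :
    MemReKp p θ u ↔
      ∃ h : ℂ → ℂ, MemHp p h ∧
        ∀ᵐ ζ ∂circleMeasure, h ζ = (starRingEnd ℂ) ζ * (u ζ : ℂ) * θ ζ := by
  have hp0 : p ≠ 0 := (zero_lt_one.trans_le hp).ne'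
  have hφ : MemHp ⊤ (dslope θ 0) := hθ.1.dslope_zero hθ0
  constructor
  · rintro ⟨g, ⟨hg, h, hh, hh_ae⟩, hug⟩
    refine ⟨(2⁻¹ : ℂ) • (g * dslope θ 0 + h), ((hg.mul hp0 hφ).add hp hh).const_smul hp0 _, ?_⟩
    filter_upwards [circleMeasure_ae_norm_eq_one, hh_ae, hug] with ζ hζ hhζ huζ
    simp only [Pi.smul_apply, Pi.add_apply, Pi.mul_apply, smul_eq_mul,
      dslope_zero_eq_conj_mul hθ0 hζ, hhζ, huζ, re_eq_add_conj]
    ring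
  · rintro ⟨H, hH, hH_ae⟩
    obtain ⟨f, hf, huf⟩ := hu
    refine ⟨f, ⟨hf, (2 : ℂ) • H - f * dslope θ 0,
      (hH.const_smul hp0 2).sub hp (hf.mul hp0 hφ), ?_⟩, huf⟩
    filter_upwards [circleMeasure_ae_norm_eq_one, hH_ae, huf] with ζ hζ hHζ hufζ
    simp only [Pi.sub_apply, Pi.smul_apply, Pi.mul_apply, smul_eq_mul,
      dslope_zero_eq_conj_mul hθ0 hζ, hHζ, hufζ, re_eq_add_conj]
    ring
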